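/- On E = Λ^•(ℝ^{2l})* ⊗ S, with E^- := -4 F^- F^- and F^+ as above, the commutation relation [E^-, F^+] = -F^- holds. -/

import Mathlib

open ExteriorAlgebra TensorProduct MvPolynomial

noncomputable section

/-- Index set for a symplectic basis of `ℝ^{2l}`: `inl i = e_i`, `inr i = e_{i+l}`. -/
abbrev Idx (l : ℕ) := Fin l ⊕ Fin l

/-- Coefficients `ω_{jk} = ω₀(e_j, e_k)` of the standard symplectic form;
with the convention `ω_{jk} ω^{ik} = δ_j^i` one also has `ω^{jk} = ω_{jk}`. -/
def omg (l : ℕ) : Idx l → Idx l → ℝ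
  | Sum.inl a, Sum.inr b => if a = b then 1 else 0
  | Sum.inr a, Sum.inl b => if a = b then -1 else 0
  | Sum.inl _, Sum.inl _ => 0
  | Sum.inr _, Sum.inr _ => 0

/-- The standard symplectic form `ω₀` on `ℝ^{2l}`. -/
def omega0 (l : ℕ) (v w : Idx l → ℝ) : ℝ := ∑ j, ∑ k, omg l j k * v j * w k

/-- The space `Λ^•(ℝ^{2l})^*` of complex(ified) exterior forms, modelled as the
exterior algebra on the span of the dual basis `{ε^k}`. -/
abbrev Forms (l : ℕ) := ExteriorAlgebra ℂ (Idx l → ℂ)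

/-- The dual basis vector `ε^k` as a 1-form. -/
def eps (l : ℕ) (k : Idx l) : Forms l := ExteriorAlgebra.ι ℂ (Pi.single k 1)

/-- Contraction `ι_{e_j}` of exterior forms by the basis vector `e_j`. -/
def ctr (l : ℕ) (j : Idx l) : Forms l →ₗ[ℂ] Forms l :=
  CliffordAlgebra.contractLeft (LinearMap.proj j)

/-- Contraction `ι_v` by a real vector `v ∈ ℝ^{2l}`. -/
def ctrV (l : ℕ) (v : Idx l → ℝ) : Forms l →ₗ[ℂ] Forms l :=
  ∑ j, (v j : ℂ) • ctr l j

section S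
variable {l : ℕ} {S : Type*} [AddCommGroup S] [Module ℂ S]

/-- Clifford multiplication by a real vector `v`, extended from its values
`c k` on the symplectic basis vectors. -/
def clV (l : ℕ) (c : Idx l → S →ₗ[ℂ] S) (v : Idx l → ℝ) : S →ₗ[ℂ] S :=
  ∑ k, (v k : ℂ) • c k

/-- The operator `F⁺(α ⊗ s) = (i/2) Σ_k ε^k ∧ α ⊗ e_k·s` on `Λ^• ⊗ S`. -/
def Fp (l : ℕ) (c : Idx l → S →ₗ[ℂ] S) : Forms l ⊗[ℂ] S →ₗ[ℂ] Forms l ⊗[ℂ] S :=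
  (Complex.I / 2) • ∑ k, TensorProduct.map (LinearMap.mulLeft ℂ (eps l k)) (c k)

/-- The operator `F⁻(α ⊗ s) = (1/2) Σ_{j,k} ω^{jk} ι_{e_j} α ⊗ e_k·s` on `Λ^• ⊗ S`. -/
def Fm (l : ℕ) (c : Idx l → S →ₗ[ℂ] S) : Forms l ⊗[ℂ] S →ₗ[ℂ] Forms l ⊗[ℂ] S :=
  (1 / 2 : ℂ) • ∑ j, ∑ k, (omg l j k : ℂ) • TensorProduct.map (ctr l j) (c k)

end S

/-- The concrete symplectic Clifford multiplication on `S = ℂ[x^1,…,x^l]`: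
`e_i · s = i x^i s` and `e_{i+l} · s = ∂s/∂x^i`. -/
def cPoly (l : ℕ) : Idx l → MvPolynomial (Fin l) ℂ →ₗ[ℂ] MvPolynomial (Fin l) ℂ
  | Sum.inl i => Complex.I • LinearMap.mulLeft ℂ (X i)
  | Sum.inr i => (pderiv i).toLinearMap

/-!
Write `F⁻ = ½ D` and `F⁺ = (i/2) P` with `D = ∑ ω_{jk} ι_{e_j} ⊗ e_k·` and `P = ∑ ε^k ∧ ⊗ e_k·`.
The contractions anticommute, while the Clifford multiplications satisfy
`[e_j·, e_k·] = -i ω_{jk}`; hence `D²` collapses to the purely exterior operator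
`-(i/2) ∑ ω_{jk} ι_{e_j} ι_{e_k} ⊗ 1`.
Since `[ι_{e_j} ι_{e_k}, ε^m ∧] = δ_{km} ι_{e_j} - δ_{jm} ι_{e_k}`, the commutator of that operator with `P` is `2 D`, so `[D², P] = -i D` and `[-4 F⁻F⁻, F⁺] = -F⁻`.
Only the symplectic Clifford relations of `S` enter, so the identity holds for every such module.
-/

section CanonicalRelations

variable {R : Type*} [Ring R] [Algebra ℂ R] {ι : Type*} [Fintype ι]

theorem mul_mul_sub_mul_mul_of_anticommute {a b z : R} {α β : ℂ}
    (ha : a * z + z * a = α • 1) (hb : b * z + z * b = β • 1) :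
    a * b * z - z * (a * b) = β • a - α • b := by
  have ha' : a * z = α • 1 - z * a := eq_sub_of_add_eq ha
  have hb' : b * z = β • 1 - z * b := eq_sub_of_add_eq hb
  calc a * b * z - z * (a * b) = a * (b * z) - z * (a * b) := by rw [mul_assoc]
    _ = β • a - a * z * b - z * (a * b) := by
      rw [hb', mul_sub, mul_smul_comm, mul_one, mul_assoc]
    _ = β • a - α • b := by
      rw [ha', sub_mul, smul_mul_assoc, one_mul, mul_assoc]; abel

theorem commutator_sum_smul (z : ι → R) (a b : ι → ℂ) (μ : ι → ι → ℂ)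
    (hz : ∀ j k, z j * z k - z k * z j = μ j k • 1) :
    (∑ j, a j • z j) * (∑ k, b k • z k) - (∑ k, b k • z k) * (∑ j, a j • z j)
      = (∑ j, ∑ k, a j * b k * μ j k) • 1 := by
  simp only [Finset.sum_mul_sum, smul_mul_smul_comm]
  rw [Finset.sum_comm (f := fun k j => (b k * a j) • (z k * z j)), ← Finset.sum_sub_distrib,
    Finset.sum_smul]
  refine Finset.sum_congr rfl fun j _ => ?_
  rw [← Finset.sum_sub_distrib, Finset.sum_smul]
  refine Finset.sum_congr rfl fun k _ => ?_
  rw [mul_comm (b k), ← smul_sub, hz, smul_smul]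

theorem sum_mul_self_of_anticommute (x y : ι → R) (μ : ι → ι → ℂ)
    (hx : ∀ j k, x j * x k = -(x k * x j)) (hxy : ∀ j k, Commute (x j) (y k))
    (hy : ∀ j k, y j * y k - y k * y j = μ j k • 1) :
    (∑ j, x j * y j) * (∑ j, x j * y j) = (1 / 2 : ℂ) • ∑ j, ∑ k, μ j k • (x j * x k) := by
  set s := (∑ j, x j * y j) * (∑ j, x j * y j)
  have hs : s = ∑ j, ∑ k, x j * x k * (y j * y k) := by
    simp only [s, Finset.sum_mul_sum]
    refine Finset.sum_congr rfl fun j _ => Finset.sum_congr rfl fun k _ => ?_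
    rw [mul_assoc, ← mul_assoc (y j), (hxy k j).symm.eq]; noncomm_ring
  have hswap : ∑ j, ∑ k, x j * x k * (y k * y j) = -s := by
    rw [hs, Finset.sum_comm, ← Finset.sum_neg_distrib]
    refine Finset.sum_congr rfl fun j _ => ?_
    rw [← Finset.sum_neg_distrib]
    refine Finset.sum_congr rfl fun k _ => ?_
    rw [hx, neg_mul]
  have htwice : s + s = ∑ j, ∑ k, μ j k • (x j * x k) := by
    nth_rewrite 1 [hs]
    rw [← sub_neg_eq_add, ← hswap, ← Finset.sum_sub_distrib]
    refine Finset.sum_congr rfl fun j _ => ?_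
    rw [← Finset.sum_sub_distrib]
    refine Finset.sum_congr rfl fun k _ => ?_
    rw [← mul_sub, hy, mul_smul_comm, mul_one]
  rw [← htwice, ← two_smul ℂ s, smul_smul]; norm_num

theorem commutator_sum_smul_mul_sum_mul_of_anticommute [DecidableEq ι] (x e z : ι → R)
    (ω : ι → ι → ℂ) (hxe : ∀ j m, x j * e m + e m * x j = (if j = m then 1 else 0 : ℂ) • 1)
    (hxz : ∀ j m, Commute (x j) (z m)) (hω : ∀ j k, ω j k = -ω k j) :
    (∑ j, ∑ k, ω j k • (x j * x k)) * (∑ m, e m * z m)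
      - (∑ m, e m * z m) * (∑ j, ∑ k, ω j k • (x j * x k))
      = (2 : ℂ) • ∑ j, ∑ k, ω j k • (x j * z k) := by
  have hterm : ∀ j k, x j * x k * (∑ m, e m * z m) - (∑ m, e m * z m) * (x j * x k)
      = x j * z k - x k * z j := by
    intro j k
    rw [Finset.mul_sum, Finset.sum_mul, ← Finset.sum_sub_distrib]
    have hm : ∀ m, x j * x k * (e m * z m) - e m * z m * (x j * x k)
        = (if k = m then 1 else 0 : ℂ) • (x j * z m)
          - (if j = m then 1 else 0 : ℂ) • (x k * z m) := by
      intro m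
      rw [← mul_assoc, mul_assoc (e m), ← ((hxz j m).mul_left (hxz k m)).eq, ← mul_assoc,
        ← sub_mul, mul_mul_sub_mul_mul_of_anticommute (hxe j m) (hxe k m), sub_mul,
        smul_mul_assoc, smul_mul_assoc]
    simp only [hm, ite_smul, one_smul, zero_smul, Finset.sum_sub_distrib, Finset.sum_ite_eq,
      Finset.mem_univ, if_true]
  have hswap : ∑ j, ∑ k, ω j k • (x k * z j) = -∑ j, ∑ k, ω j k • (x j * z k) := by
    rw [Finset.sum_comm, ← Finset.sum_neg_distrib]
    refine Finset.sum_congr rfl fun j _ => ?_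
    rw [← Finset.sum_neg_distrib]
    refine Finset.sum_congr rfl fun k _ => ?_
    rw [hω, neg_smul]
  calc _ = ∑ j, ∑ k, ω j k • (x j * z k - x k * z j) := by
        rw [Finset.sum_mul, Finset.mul_sum, ← Finset.sum_sub_distrib]
        refine Finset.sum_congr rfl fun j _ => ?_
        rw [Finset.sum_mul, Finset.mul_sum, ← Finset.sum_sub_distrib]
        refine Finset.sum_congr rfl fun k _ => ?_
        rw [smul_mul_assoc, mul_smul_comm, ← smul_sub, hterm]
    _ = (2 : ℂ) • ∑ j, ∑ k, ω j k • (x j * z k) := by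
        simp only [smul_sub, Finset.sum_sub_distrib, hswap, sub_neg_eq_add, two_smul]

theorem commutator_mul_self_of_anticommute [DecidableEq ι] (x e z : ι → R) (ω : ι → ι → ℂ)
    (hx : ∀ j k, x j * x k = -(x k * x j))
    (hxe : ∀ j m, x j * e m + e m * x j = (if j = m then 1 else 0 : ℂ) • 1)
    (hxz : ∀ j m, Commute (x j) (z m))
    (hz : ∀ j k, z j * z k - z k * z j = (-Complex.I * ω j k) • 1)
    (hω : ∀ j k, ω j k = -ω k j) (hω_sq : ∀ j k, ∑ m, ω j m * ω m k = -if j = k then 1 else 0)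
    {D P : R} (hD : D = ∑ j, ∑ k, ω j k • (x j * z k)) (hP : P = ∑ m, e m * z m) :
    D * D * P - P * (D * D) = -Complex.I • D := by
  -- The raised operators `y j = ∑ k, ω j k • z k` obey the same relations since `ω² = -1`.
  set y : ι → R := fun j => ∑ k, ω j k • z k
  have hDy : D = ∑ j, x j * y j := by simp only [hD, y, Finset.mul_sum, mul_smul_comm]
  have hy : ∀ j k, y j * y k - y k * y j = (-Complex.I * ω j k) • 1 := by
    intro j k
    rw [commutator_sum_smul z _ _ _ hz]
    congr 1
    have hinv : ∀ a, ∑ b, ω a b * ω k b = if a = k then 1 else 0 := by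
      intro a
      simp_rw [hω k, mul_neg, Finset.sum_neg_distrib, hω_sq, neg_neg]
    calc ∑ a, ∑ b, ω j a * ω k b * (-Complex.I * ω a b)
        = ∑ a, -Complex.I * ω j a * ∑ b, ω a b * ω k b := by
          simp only [Finset.mul_sum]
          exact Finset.sum_congr rfl fun a _ => Finset.sum_congr rfl fun b _ => by ring
      _ = -Complex.I * ω j k := by simp only [hinv, mul_ite, mul_one, mul_zero,
          Finset.sum_ite_eq', Finset.mem_univ, if_true]
  have hsq : D * D = (-Complex.I / 2) • ∑ j, ∑ k, ω j k • (x j * x k) := by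
    rw [hDy, sum_mul_self_of_anticommute x y _ hx
      (fun j k => Commute.sum_right _ _ _ fun m _ => (hxz j m).smul_right _) hy]
    simp only [smul_smul, Finset.smul_sum]
    exact Finset.sum_congr rfl fun j _ => Finset.sum_congr rfl fun k _ => by ring_nf
  rw [hsq, smul_mul_assoc, mul_smul_comm, ← smul_sub, hP,
    commutator_sum_smul_mul_sum_mul_of_anticommute x e z ω hxe hxz hω, ← hD, smul_smul]
  congr 1; ring

end CanonicalRelations

section Exterior

variable {l : ℕ}

theorem ctr_mul_ctr (j k : Idx l) : ctr l j * ctr l k = -(ctr l k * ctr l j) :=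
  LinearMap.ext fun x => CliffordAlgebra.contractLeft_comm (Q := 0) _ _ x

theorem ctr_mul_eps_add_eps_mul_ctr (j k : Idx l) :
    ctr l j * LinearMap.mulLeft ℂ (eps l k) + LinearMap.mulLeft ℂ (eps l k) * ctr l j
      = (if j = k then 1 else 0 : ℂ) • 1 := by
  refine LinearMap.ext fun x => ?_
  simp only [ctr, eps, Module.End.mul_apply, LinearMap.add_apply, LinearMap.mulLeft_apply,
    CliffordAlgebra.contractLeft_ι_mul, LinearMap.proj_apply, Pi.single_apply, sub_add_cancel]
  split_ifs <;> rfl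

end Exterior

theorem omg_antisymm {l : ℕ} (j k : Idx l) : omg l j k = -omg l k j := by
  rcases j with a | a <;> rcases k with b | b <;> simp [omg, eq_comm, neg_ite]

theorem sum_omg_mul_omg {l : ℕ} (j k : Idx l) :
    ∑ m, omg l j m * omg l m k = -if j = k then 1 else 0 := by
  rcases j with a | a <;> rcases k with b | b <;>
    simp [omg, Fintype.sum_sum_type, eq_comm, neg_ite]

section TensorEnd

variable {R M N : Type*} [CommRing R] [AddCommGroup M] [Module R M] [AddCommGroup N] [Module R N]

theorem rTensorAlgHom_mul_lTensorAlgHom (f : Module.End R M) (g : Module.End R N) :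
    Module.End.rTensorAlgHom R M N f * Module.End.lTensorAlgHom R N M g = TensorProduct.map f g :=
  LinearMap.rTensor_comp_lTensor M f g

theorem commute_rTensorAlgHom_lTensorAlgHom (f : Module.End R M) (g : Module.End R N) :
    Commute (Module.End.rTensorAlgHom R M N f) (Module.End.lTensorAlgHom R N M g) :=
  (rTensorAlgHom_mul_lTensorAlgHom f g).trans (LinearMap.lTensor_comp_rTensor _ f g).symm

end TensorEnd

theorem pderiv_pderiv_comm {σ R : Type*} [CommRing R] (i j : σ) (f : MvPolynomial σ R) :
    pderiv i (pderiv j f) = pderiv j (pderiv i f) := by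
  classical
  have h : ⁅pderiv i, pderiv j⁆ = (0 : Derivation R (MvPolynomial σ R) (MvPolynomial σ R)) :=
    derivation_ext fun k => by
      rw [Derivation.commutator_apply]
      simp [pderiv_X, Pi.single_apply, apply_ite]
  rw [← sub_eq_zero, ← Derivation.commutator_apply, h, Derivation.zero_apply]

def IsSymplecticClifford {l : ℕ} {S : Type*} [AddCommGroup S] [Module ℂ S]
    (c : Idx l → Module.End ℂ S) : Prop :=
  ∀ j k, c j * c k - c k * c j = (-Complex.I * omg l j k) • 1

theorem isSymplecticClifford_cPoly (l : ℕ) : IsSymplecticClifford (cPoly l) := by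
  intro j k
  refine LinearMap.ext fun f => ?_
  rcases j with a | a <;> rcases k with b | b
  · simp [cPoly, omg, mul_left_comm (X a) (X b)]
  · by_cases hab : a = b <;> simp [cPoly, omg, pderiv_X, hab]
  · by_cases hab : a = b <;> simp [cPoly, omg, pderiv_X, hab, Ne.symm]
  · simp [cPoly, omg, pderiv_pderiv_comm a b f]

theorem commutator_Em_Fp_eq_neg_Fm_of_isSymplecticClifford {l : ℕ} {S : Type*}
    [AddCommGroup S] [Module ℂ S] {c : Idx l → Module.End ℂ S} (hc : IsSymplecticClifford c) :
    ((-4 : ℂ) • (Fm l c ∘ₗ Fm l c)) ∘ₗ Fp l c - Fp l c ∘ₗ ((-4 : ℂ) • (Fm l c ∘ₗ Fm l c))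
      = -Fm l c := by
  let x j := Module.End.rTensorAlgHom ℂ (Forms l) S (ctr l j)
  let e m := Module.End.rTensorAlgHom ℂ (Forms l) S (LinearMap.mulLeft ℂ (eps l m))
  let z m := Module.End.lTensorAlgHom ℂ S (Forms l) (c m)
  set D := ∑ j, ∑ k, (omg l j k : ℂ) • (x j * z k) with hD
  set P := ∑ m, e m * z m with hP
  have hFm : Fm l c = (1 / 2 : ℂ) • D := by
    simp only [Fm, D, x, z, rTensorAlgHom_mul_lTensorAlgHom]
  have hFp : Fp l c = (Complex.I / 2) • P := by
    simp only [Fp, P, e, z, rTensorAlgHom_mul_lTensorAlgHom]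
  have hDP := commutator_mul_self_of_anticommute x e z (fun j k => (omg l j k : ℂ))
    (fun j k => by rw [← map_mul, ← map_mul, ctr_mul_ctr, map_neg])
    (fun j m => by
      rw [← map_mul, ← map_mul, ← map_add, ctr_mul_eps_add_eps_mul_ctr, map_smul, map_one])
    (fun j m => commute_rTensorAlgHom_lTensorAlgHom _ _)
    (fun j k => by
      rw [← map_mul, ← map_mul, ← map_sub (Module.End.lTensorAlgHom ℂ S (Forms l)), hc j k,
        map_smul, map_one])
    (fun j k => by exact_mod_cast omg_antisymm j k)
    (fun j k => by
      simpa [apply_ite Complex.ofReal] using congrArg Complex.ofReal (sum_omg_mul_omg j k))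
    hD hP
  simp only [← Module.End.mul_eq_comp, hFm, hFp, smul_mul_assoc, mul_smul_comm, smul_smul]
  calc _ = (-Complex.I / 2) • (D * D * P - P * (D * D)) := by module
    _ = -((1 / 2 : ℂ) • D) := by
        rw [hDP, smul_smul]
        match_scalars
        linear_combination (1 / 2 : ℂ) * Complex.I_sq

/-- With `E⁻ := -4 F⁻F⁻` on `Λ^•(ℝ^{2l})* ⊗ S`, `S = ℂ[x^1,…,x^l]`, the
commutation relation `[E⁻, F⁺] = -F⁻` holds. -/
theorem commutator_Em_Fp_eq_neg_Fm (l : ℕ) :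
    ((-4 : ℂ) • (Fm l (cPoly l) ∘ₗ Fm l (cPoly l))) ∘ₗ Fp l (cPoly l)
      - Fp l (cPoly l) ∘ₗ ((-4 : ℂ) • (Fm l (cPoly l) ∘ₗ Fm l (cPoly l)))
      = -Fm l (cPoly l) :=
  commutator_Em_Fp_eq_neg_Fm_of_isSymplecticClifford (isSymplecticClifford_cPoly l)

end
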